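/- arXiv:2312.16976 — 3 statements merged into one kernel-verified Lean document; each statement's English description precedes it below -/
import Mathlib

section
/- Let $G$ be a group, and let $c$ be a closure operator on the power set of $G$ satisfying: (a) $G$-invariance: $c(gA) = g\,c(A)$ for all $g \in G$, $A \subseteq G$; (b) every closure of a finite set containing $1$ is again mapped into the family of 'compact sets containing 1'. Define $S_c = \{(\Delta, g) : g \in G, \Delta = c(F) \text{ for some finite } F \subseteq G, 1 \in \Delta, g \in \Delta\}$ with multiplication $(\Delta, g)(\Xi, h) = (c(\Delta \cup g\Xi), gh)$. Then this multiplication is associative. -/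
open scoped Pointwise

/-- Associativity of the multiplication `(Δ, g)(Ξ, h) = (c (Δ ∪ gΞ), gh)` on pairs
`(Δ, g)` where `Δ` is the closure of a finite set containing `1` and `g`, for a
`G`-invariant closure operator `c` on subsets of the group `G`. -/
theorem stmt5 {G : Type*} [Group G] (c : ClosureOperator (Set G))
    (hinv : ∀ (g : G) (A : Set G), c (g • A) = g • c A) :
    ∀ (Δ Ξ Ω : Set G) (g h k : G),
      (∃ F : Set G, F.Finite ∧ Δ = c F) → (1 : G) ∈ Δ → g ∈ Δ →
      (∃ F : Set G, F.Finite ∧ Ξ = c F) → (1 : G) ∈ Ξ → h ∈ Ξ →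
      (∃ F : Set G, F.Finite ∧ Ω = c F) → (1 : G) ∈ Ω → k ∈ Ω →
      (c (c (Δ ∪ g • Ξ) ∪ (g * h) • Ω), (g * h) * k) =
        (c (Δ ∪ g • c (Ξ ∪ h • Ω)), g * (h * k)) := by
  intro Δ Ξ Ω g h k _ _ _ _ _ _ _ _ _
  rw [mul_assoc, ← hinv]
  congr 1
  calc c (c (Δ ∪ g • Ξ) ∪ (g * h) • Ω) = c (Δ ∪ g • Ξ ∪ (g * h) • Ω) :=
        c.closure_sup_closure_left _ _
    _ = c (Δ ∪ g • (Ξ ∪ h • Ω)) := by rw [Set.union_assoc, Set.smul_set_union, smul_smul]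
    _ = c (Δ ∪ c (g • (Ξ ∪ h • Ω))) := (c.closure_sup_closure_right _ _).symm
end

section
/- Let $G$ be a group and $c$ a $G$-invariant closure operator on the power set of $G$ (i.e., $c(gA) = g\,c(A)$ for all $g, A$). Define $S_c$ as the set of pairs $(\Delta, g)$ with $\Delta$ a $c$-closed subset of $G$ containing $1$ and $g$, with multiplication $(\Delta, g)(\Xi, h) = (c(\Delta \cup g\Xi), gh)$, inversion $(\Delta, g)^{-1} = (g^{-1}\Delta, g^{-1})$, and identity $(c(\{1\}), 1)$. Then $S_c$ is an inverse monoid: every element $s$ satisfies $s s^{-1} s = s$ and $s^{-1} s s^{-1} = s^{-1}$, and idempotents commute. -/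
open scoped Pointwise

variable {G : Type*} [Group G]

/-- The set of pairs `(Δ, g)` with `Δ` a `c`-closed subset of `G` containing `1` and `g`. -/
def SC (c : ClosureOperator (Set G)) : Type _ :=
  {p : Set G × G // c p.1 = p.1 ∧ (1 : G) ∈ p.1 ∧ p.2 ∈ p.1}

/-- Multiplication `(Δ, g)(Ξ, h) = (c (Δ ∪ gΞ), gh)`. -/
def SCmul (c : ClosureOperator (Set G)) (s t : SC c) : SC c :=
  ⟨(c (s.1.1 ∪ s.1.2 • t.1.1), s.1.2 * t.1.2), by
    refine ⟨c.idempotent _, ?_, ?_⟩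
    · exact c.le_closure _ (Or.inl s.2.2.1)
    · exact c.le_closure _ (Or.inr (by
        simpa [smul_eq_mul] using Set.smul_mem_smul_set (a := s.1.2) t.2.2.2))⟩

/-- Inversion `(Δ, g)⁻¹ = (g⁻¹Δ, g⁻¹)` (needs `G`-invariance of `c`). -/
def SCinv (c : ClosureOperator (Set G))
    (hinv : ∀ (g : G) (A : Set G), c (g • A) = g • c A) (s : SC c) : SC c :=
  ⟨(s.1.2⁻¹ • s.1.1, s.1.2⁻¹), by
    refine ⟨by rw [hinv, s.2.1], ?_, ?_⟩
    · exact Set.mem_smul_set.mpr ⟨s.1.2, s.2.2.2, by simp⟩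
    · exact Set.mem_smul_set.mpr ⟨1, s.2.2.1, by simp⟩⟩

/-- The identity element `(c {1}, 1)`. -/
def SCone (c : ClosureOperator (Set G)) : SC c :=
  ⟨(c {1}, 1), c.idempotent _, c.le_closure _ rfl, c.le_closure _ rfl⟩

/-- The candidate maximum `(c {1, g}, g)` of the `σ`-class of `(Δ, g)`. -/
def SCm (c : ClosureOperator (Set G)) (s : SC c) : SC c :=
  ⟨(c {1, s.1.2}, s.1.2), c.idempotent _, c.le_closure _ (Or.inl rfl),
    c.le_closure _ (Or.inr rfl)⟩

/-!
The group coordinate of `S_c` is multiplication in `G`, so only the set coordinate needs work.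
Absorbing inner closures, `c (c A ∪ B) = c (A ∪ B)`, together with `G`-invariance
`g • c A = c (g • A)`, reduces both sides of associativity to `c (Δ ∪ gΞ ∪ ghΥ)` and the inverse
laws to `c Δ = Δ`. An idempotent `(Δ, g)` has `g * g = g`, hence `g = 1`, and on elements with
trivial group coordinate the product is `(c (Δ ∪ Ξ), 1)`, which is symmetric.
-/

theorem ClosureOperator.closure_union_closure_left {α : Type*} (c : ClosureOperator (Set α))
    (A B : Set α) : c (c A ∪ B) = c (A ∪ B) :=
  c.closure_sup_closure_left A B

theorem ClosureOperator.closure_union_closure_right {α : Type*} (c : ClosureOperator (Set α))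
    (A B : Set α) : c (A ∪ c B) = c (A ∪ B) :=
  c.closure_sup_closure_right A B

namespace SC

variable {c : ClosureOperator (Set G)}

theorem ext {s t : SC c} (h₁ : s.1.1 = t.1.1) (h₂ : s.1.2 = t.1.2) : s = t :=
  Subtype.ext (Prod.ext h₁ h₂)

theorem closure_eq (s : SC c) : c s.1.1 = s.1.1 := s.2.1

theorem one_mem (s : SC c) : (1 : G) ∈ s.1.1 := s.2.2.1

theorem snd_mem (s : SC c) : s.1.2 ∈ s.1.1 := s.2.2.2

@[simp] theorem mul_fst (s t : SC c) : (SCmul c s t).1.1 = c (s.1.1 ∪ s.1.2 • t.1.1) := rfl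

@[simp] theorem mul_snd (s t : SC c) : (SCmul c s t).1.2 = s.1.2 * t.1.2 := rfl

@[simp] theorem one_fst : (SCone c).1.1 = c {1} := rfl

@[simp] theorem one_snd : (SCone c).1.2 = 1 := rfl

@[simp] theorem inv_fst (hinv : ∀ (g : G) (A : Set G), c (g • A) = g • c A) (s : SC c) :
    (SCinv c hinv s).1.1 = s.1.2⁻¹ • s.1.1 := rfl

@[simp] theorem inv_snd (hinv : ∀ (g : G) (A : Set G), c (g • A) = g • c A) (s : SC c) :
    (SCinv c hinv s).1.2 = s.1.2⁻¹ := rfl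

theorem one_mul (s : SC c) : SCmul c (SCone c) s = s := by
  refine ext ?_ (_root_.one_mul _)
  simp only [mul_fst, one_fst, one_snd, one_smul]
  rw [c.closure_union_closure_left,
    Set.union_eq_self_of_subset_left (Set.singleton_subset_iff.2 s.one_mem), s.closure_eq]

theorem mul_one (hinv : ∀ (g : G) (A : Set G), c (g • A) = g • c A) (s : SC c) :
    SCmul c s (SCone c) = s := by
  refine ext ?_ (_root_.mul_one _)
  simp only [mul_fst, one_fst]
  rw [← hinv, c.closure_union_closure_right, Set.smul_set_singleton, smul_eq_mul,
    _root_.mul_one, Set.union_eq_self_of_subset_right (Set.singleton_subset_iff.2 s.snd_mem),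
    s.closure_eq]

theorem mul_assoc (hinv : ∀ (g : G) (A : Set G), c (g • A) = g • c A) (s t u : SC c) :
    SCmul c (SCmul c s t) u = SCmul c s (SCmul c t u) := by
  refine ext ?_ (_root_.mul_assoc _ _ _)
  simp only [mul_fst, mul_snd]
  rw [c.closure_union_closure_left, ← hinv, c.closure_union_closure_right, Set.smul_set_union,
    smul_smul, Set.union_assoc]

theorem mul_inv_mul (hinv : ∀ (g : G) (A : Set G), c (g • A) = g • c A) (s : SC c) :
    SCmul c (SCmul c s (SCinv c hinv s)) s = s := by
  refine ext ?_ (by simp)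
  simp only [mul_fst, mul_snd, inv_fst, inv_snd]
  rw [smul_inv_smul, mul_inv_cancel, one_smul, Set.union_self, c.closure_union_closure_left,
    Set.union_self, s.closure_eq]

theorem inv_mul_inv (hinv : ∀ (g : G) (A : Set G), c (g • A) = g • c A) (s : SC c) :
    SCmul c (SCmul c (SCinv c hinv s) s) (SCinv c hinv s) = SCinv c hinv s := by
  refine ext ?_ (by simp)
  simp only [mul_fst, mul_snd, inv_fst, inv_snd]
  rw [inv_mul_cancel, one_smul, Set.union_self, c.closure_union_closure_left, Set.union_self,
    hinv, s.closure_eq]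

theorem snd_eq_one_of_idempotent {e : SC c} (he : SCmul c e e = e) : e.1.2 = 1 :=
  mul_eq_left.1 (congrArg (fun x : SC c => x.1.2) he)

theorem mul_comm_of_snd_eq_one {e f : SC c} (he : e.1.2 = 1) (hf : f.1.2 = 1) :
    SCmul c e f = SCmul c f e := by
  refine ext ?_ (by simp only [mul_snd, he, hf])
  simp only [mul_fst, he, hf, one_smul, Set.union_comm]

end SC

/-- `S_c` is an inverse monoid: multiplication is associative, `(c {1}, 1)` is a two-sided
identity, `s s⁻¹ s = s` and `s⁻¹ s s⁻¹ = s⁻¹` hold, and idempotents commute. -/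
theorem stmt7 (c : ClosureOperator (Set G))
    (hinv : ∀ (g : G) (A : Set G), c (g • A) = g • c A) :
    (∀ s t u : SC c, SCmul c (SCmul c s t) u = SCmul c s (SCmul c t u)) ∧
    (∀ s : SC c, SCmul c (SCone c) s = s ∧ SCmul c s (SCone c) = s) ∧
    (∀ s : SC c, SCmul c (SCmul c s (SCinv c hinv s)) s = s) ∧
    (∀ s : SC c, SCmul c (SCmul c (SCinv c hinv s) s) (SCinv c hinv s) = SCinv c hinv s) ∧
    (∀ e f : SC c, SCmul c e e = e → SCmul c f f = f → SCmul c e f = SCmul c f e) :=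
  ⟨SC.mul_assoc hinv, fun s => ⟨SC.one_mul s, SC.mul_one hinv s⟩, SC.mul_inv_mul hinv,
    SC.inv_mul_inv hinv, fun _ _ he hf =>
      SC.mul_comm_of_snd_eq_one (SC.snd_eq_one_of_idempotent he)
        (SC.snd_eq_one_of_idempotent hf)⟩
end

section
/- In the inverse monoid $S_c$ (pairs $(\Delta, g)$ with $\Delta$ $c$-closed containing $1$ and $g$, multiplication $(\Delta,g)(\Xi,h) = (c(\Delta \cup g\Xi), gh)$, inversion $(\Delta,g)^{-1}=(g^{-1}\Delta, g^{-1})$), the natural partial order satisfies: $(\Delta, g) \leq (\Xi, h)$ if and only if $g = h$ and $\Xi \subseteq \Delta$. -/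
open scoped Pointwise

variable {G : Type*} [Group G]

theorem ClosureOperator.closure_sup_eq_left_iff {α : Type*} [SemilatticeSup α]
    (c : ClosureOperator α) {x y : α} (hx : c x = x) : c (x ⊔ y) = x ↔ y ≤ x := by
  rw [le_antisymm_iff, and_iff_left (le_sup_left.trans (c.le_closure _)),
    (c.isClosed_iff.mpr hx).closure_le_iff, sup_le_iff, and_iff_right le_rfl]

/-- `s s⁻¹` is the idempotent `(Δ, 1)`. -/
theorem SCmul_SCmul_SCinv_self_val (c : ClosureOperator (Set G))
    (hinv : ∀ (g : G) (A : Set G), c (g • A) = g • c A) (s t : SC c) :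
    (SCmul c (SCmul c s (SCinv c hinv s)) t).1 = (c (s.1.1 ∪ t.1.1), t.1.2) := by
  show (c (c (s.1.1 ∪ s.1.2 • s.1.2⁻¹ • s.1.1) ∪ (s.1.2 * s.1.2⁻¹) • t.1.1),
    s.1.2 * s.1.2⁻¹ * t.1.2) = _
  rw [smul_inv_smul, Set.union_self, s.2.1, mul_inv_cancel, one_smul, one_mul]

/-- The natural partial order on `S_c` (namely `s ≤ t ↔ s = (s s⁻¹) t`) is given by:
`(Δ, g) ≤ (Ξ, h)` iff `g = h` and `Ξ ⊆ Δ`. -/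
theorem stmt9 (c : ClosureOperator (Set G))
    (hinv : ∀ (g : G) (A : Set G), c (g • A) = g • c A) :
    ∀ s t : SC c,
      SCmul c (SCmul c s (SCinv c hinv s)) t = s ↔ (s.1.2 = t.1.2 ∧ t.1.1 ⊆ s.1.1) := by
  intro s t
  refine Subtype.ext_iff.trans ?_
  rw [SCmul_SCmul_SCinv_self_val, Prod.ext_iff]
  exact and_comm.trans (and_congr eq_comm (c.closure_sup_eq_left_iff s.2.1))
end
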